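/- Let ((S,T),(U,V)) be a twin cotorsion pair on an extriangulated category B, with σ^+: B̲ → B̲^+ the right adjoint of the inclusion B̲^+ ↪ B̲ and σ^-: B̲^- ← B̲ the left adjoint of the inclusion B̲^- ↪ B̲ (both existing by reflection/coreflection sequences). Then there is a natural isomorphism of functors η: σ^+ ∘ σ^- ≅ σ^- ∘ σ^+ from B̲ to the heart H̲. -/

import Mathlib

namespace ExtriHearts

open CategoryTheory CategoryTheory.Limits Opposite

attribute [local instance] CategoryTheory.Limits.hasBinaryBiproducts_of_finite_biproducts

universe v u v₂ u₂

section IdealQuotient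

variable {D : Type u₂} [Category.{v₂} D] [Preadditive D]

/-- The subgroup of morphisms `X ⟶ Y` generated by those factoring through an object of `W`. -/
def wIdeal (W : Set D) (X Y : D) : AddSubgroup (X ⟶ Y) :=
  AddSubgroup.closure {f : X ⟶ Y | ∃ Z ∈ W, ∃ p : X ⟶ Z, ∃ q : Z ⟶ Y, f = p ≫ q}

/-- The hom relation on `D` identifying morphisms whose difference lies in the ideal
generated by morphisms factoring through an object of `W`.  (For an additively closed
subcategory `W` this is the usual relation "`f - g` factors through an object of `W`".) -/
def wRel (W : Set D) : HomRel D := fun {X Y} f g => f - g ∈ wIdeal W X Y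

lemma comp_left_mem_wIdeal (W : Set D) {X Y Z : D} (f : X ⟶ Y) {g : Y ⟶ Z}
    (hg : g ∈ wIdeal W Y Z) : f ≫ g ∈ wIdeal W X Z := by
  have hle : wIdeal W Y Z ≤ (wIdeal W X Z).comap (Preadditive.leftComp Z f) := by
    rw [wIdeal, AddSubgroup.closure_le]
    rintro g ⟨Z₀, hZ₀, p, q, rfl⟩
    exact AddSubgroup.subset_closure ⟨Z₀, hZ₀, f ≫ p, q, by
      simp [Preadditive.leftComp]⟩
  simpa [Preadditive.leftComp] using hle hg

lemma comp_right_mem_wIdeal (W : Set D) {X Y Z : D} {f : X ⟶ Y} (g : Y ⟶ Z)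
    (hf : f ∈ wIdeal W X Y) : f ≫ g ∈ wIdeal W X Z := by
  have hle : wIdeal W X Y ≤ (wIdeal W X Z).comap (Preadditive.rightComp X g) := by
    rw [wIdeal, AddSubgroup.closure_le]
    rintro f ⟨Z₀, hZ₀, p, q, rfl⟩
    exact AddSubgroup.subset_closure ⟨Z₀, hZ₀, p, q ≫ g, by
      simp [Preadditive.rightComp]⟩
  simpa [Preadditive.rightComp] using hle hf

instance wRel_congruence (W : Set D) : Congruence (wRel W) where
  equivalence :=
    { refl := fun f => by
        show f - f ∈ wIdeal W _ _
        simp only [sub_self]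
        exact zero_mem _
      symm := fun {f g} h => by
        have h' : f - g ∈ wIdeal W _ _ := h
        show g - f ∈ wIdeal W _ _
        simpa only [neg_sub] using neg_mem h'
      trans := fun {f g h} h₁ h₂ => by
        have h₁' : f - g ∈ wIdeal W _ _ := h₁
        have h₂' : g - h ∈ wIdeal W _ _ := h₂
        show f - h ∈ wIdeal W _ _
        simpa only [sub_add_sub_cancel] using add_mem h₁' h₂' }
  comp_left := fun {X Y Z} f {g g'} h => by
    have h' : g - g' ∈ wIdeal W _ _ := h
    show f ≫ g - f ≫ g' ∈ wIdeal W _ _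
    simpa only [← Preadditive.comp_sub] using comp_left_mem_wIdeal W f h'
  comp_right := fun {X Y Z} {f f'} g h => by
    have h' : f - f' ∈ wIdeal W _ _ := h
    show f ≫ g - f' ≫ g ∈ wIdeal W _ _
    simpa only [← Preadditive.sub_comp] using comp_right_mem_wIdeal W g h'

/-- The quotient of a preadditive category by (the ideal generated by) the morphisms factoring
through a class of objects `W`. -/
abbrev QuotCat (W : Set D) := CategoryTheory.Quotient (wRel W)

/-- The canonical quotient functor. -/
abbrev toQuot (W : Set D) : D ⥤ QuotCat W := Quotient.functor _

instance quotCatPreadditive (W : Set D) : Preadditive (QuotCat W) :=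
  Quotient.preadditive _ (fun X Y f₁ f₂ g₁ g₂ h₁ h₂ => by
    have h₁' : f₁ - f₂ ∈ wIdeal W X Y := h₁
    have h₂' : g₁ - g₂ ∈ wIdeal W X Y := h₂
    show f₁ + g₁ - (f₂ + g₂) ∈ wIdeal W X Y
    have heq : f₁ + g₁ - (f₂ + g₂) = f₁ - f₂ + (g₁ - g₂) := by abel
    rw [heq]
    exact add_mem h₁' h₂')

end IdealQuotient

section ExtCat

/-- The data of an additive `Ab`-valued bifunctor together with a realization predicate:
`realize δ x y` means that the 3-term sequence `A --x--> X --y--> C` realizes the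
`E`-extension `δ ∈ E(C,A)`, i.e. belongs to the equivalence class `s(δ)`. -/
structure PreExtStruct (B : Type u) [Category.{v} B] [Preadditive B] where
  /-- The additive bifunctor `E : Bᵒᵖ × B → Ab`. -/
  E : Bᵒᵖ ⥤ B ⥤ AddCommGrpCat.{v}

namespace PreExtStruct

variable {B : Type u} [Category.{v} B] [Preadditive B]

/-- The abelian group `E(C,A)` of `E`-extensions of `C` by `A`. -/
abbrev Ext (σ : PreExtStruct B) (C A : B) : AddCommGrpCat.{v} := (σ.E.obj (op C)).obj A

/-- `a_* δ`, the pushforward of an `E`-extension along `a : A ⟶ A'`. -/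
def push (σ : PreExtStruct B) {C A A' : B} (a : A ⟶ A') (δ : σ.Ext C A) : σ.Ext C A' :=
  (σ.E.obj (op C)).map a δ

/-- `c^* δ`, the pullback of an `E`-extension along `c : C' ⟶ C`. -/
def pull (σ : PreExtStruct B) {C' C A : B} (c : C' ⟶ C) (δ : σ.Ext C A) : σ.Ext C' A :=
  (σ.E.map c.op).app A δ

/-- The direct sum `δ ⊕ δ'` of two `E`-extensions, i.e. the element of
`E(C ⊞ C', A ⊞ A')` corresponding to `(δ, 0, 0, δ')`. -/
noncomputable def sumExt (σ : PreExtStruct B) [HasBinaryBiproducts B] {C C' A A' : B}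
    (δ : σ.Ext C A) (δ' : σ.Ext C' A') : σ.Ext (C ⊞ C') (A ⊞ A') :=
  σ.push biprod.inl (σ.pull biprod.fst δ) + σ.push biprod.inr (σ.pull biprod.snd δ')

end PreExtStruct

/-- An *extriangulated category* structure `(E, s)` on an additive category `B`, consisting of
an additive bifunctor `E : Bᵒᵖ × B → Ab` and an additive realization `s` of `E` (encoded by the
predicate `realize`), subject to the axioms (ET1), (ET2), (ET3), (ET3)ᵒᵖ, (ET4), (ET4)ᵒᵖ of
Nakaoka–Palu. -/
structure ExtStruct (B : Type u) [Category.{v} B] [Preadditive B] [HasFiniteBiproducts B]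
    extends PreExtStruct B where
  /-- (ET1) `E` is additive in the second variable. -/
  additive_fst : ∀ Cop : Bᵒᵖ, (E.obj Cop).Additive
  /-- (ET1) `E` is additive in the first variable. -/
  additive_snd : ∀ A : B, (E.flip.obj A).Additive
  /-- `realize δ x y` means the sequence `A --x--> X --y--> C` realizes `δ`, i.e. it belongs to
  the equivalence class `s(δ)`. -/
  realize : ∀ ⦃A C : B⦄, toPreExtStruct.Ext C A → ∀ ⦃X : B⦄, (A ⟶ X) → (X ⟶ C) → Prop
  /-- Every `E`-extension is realized by some sequence. -/
  realize_ex : ∀ ⦃A C : B⦄ (δ : toPreExtStruct.Ext C A),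
      ∃ (X : B) (x : A ⟶ X) (y : X ⟶ C), realize δ x y
  /-- `s(δ)` is closed under the equivalence of sequences. -/
  realize_iso : ∀ ⦃A C X X' : B⦄ (δ : toPreExtStruct.Ext C A) (x : A ⟶ X) (y : X ⟶ C)
      (b : X ≅ X'), realize δ x y → realize δ (x ≫ b.hom) (b.inv ≫ y)
  /-- Any two realizations of `δ` are equivalent sequences. -/
  realize_unique : ∀ ⦃A C X X' : B⦄ (δ : toPreExtStruct.Ext C A) (x : A ⟶ X) (y : X ⟶ C)
      (x' : A ⟶ X') (y' : X' ⟶ C), realize δ x y → realize δ x' y' →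
      ∃ b : X ≅ X', x ≫ b.hom = x' ∧ b.hom ≫ y' = y
  /-- (ET2)(∗) Any morphism of `E`-extensions is realized by a morphism of sequences. -/
  realize_map : ∀ ⦃A C A' C' X X' : B⦄ (δ : toPreExtStruct.Ext C A) (δ' : toPreExtStruct.Ext C' A')
      (x : A ⟶ X) (y : X ⟶ C) (x' : A' ⟶ X') (y' : X' ⟶ C') (a : A ⟶ A') (c : C ⟶ C'),
      realize δ x y → realize δ' x' y' →
      toPreExtStruct.push a δ = toPreExtStruct.pull c δ' →
      ∃ b : X ⟶ X', x ≫ b = a ≫ x' ∧ y ≫ c = b ≫ y'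
  /-- (ET2)(i) The split extension is realized by the split sequence. -/
  realize_zero : ∀ A C : B,
      realize (0 : toPreExtStruct.Ext C A) (biprod.inl : A ⟶ A ⊞ C) (biprod.snd : A ⊞ C ⟶ C)
  /-- (ET2)(ii) Realization is additive. -/
  realize_sum : ∀ ⦃A C A' C' X X' : B⦄ (δ : toPreExtStruct.Ext C A)
      (δ' : toPreExtStruct.Ext C' A') (x : A ⟶ X) (y : X ⟶ C) (x' : A' ⟶ X') (y' : X' ⟶ C'),
      realize δ x y → realize δ' x' y' →
      realize (toPreExtStruct.sumExt δ δ') (biprod.map x x') (biprod.map y y')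
  /-- (ET3) -/
  et3 : ∀ ⦃A C A' C' X X' : B⦄ (δ : toPreExtStruct.Ext C A) (δ' : toPreExtStruct.Ext C' A')
      (x : A ⟶ X) (y : X ⟶ C) (x' : A' ⟶ X') (y' : X' ⟶ C'),
      realize δ x y → realize δ' x' y' → ∀ (a : A ⟶ A') (b : X ⟶ X'), x ≫ b = a ≫ x' →
      ∃ c : C ⟶ C', toPreExtStruct.push a δ = toPreExtStruct.pull c δ' ∧ y ≫ c = b ≫ y'
  /-- (ET3)ᵒᵖ -/
  et3op : ∀ ⦃A C A' C' X X' : B⦄ (δ : toPreExtStruct.Ext C A) (δ' : toPreExtStruct.Ext C' A')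
      (x : A ⟶ X) (y : X ⟶ C) (x' : A' ⟶ X') (y' : X' ⟶ C'),
      realize δ x y → realize δ' x' y' → ∀ (b : X ⟶ X') (c : C ⟶ C'), y ≫ c = b ≫ y' →
      ∃ a : A ⟶ A', toPreExtStruct.push a δ = toPreExtStruct.pull c δ' ∧ x ≫ b = a ≫ x'
  /-- (ET4) -/
  et4 : ∀ ⦃A B₀ D C F : B⦄ (δ : toPreExtStruct.Ext D A) (f : A ⟶ B₀) (f' : B₀ ⟶ D)
      (δ' : toPreExtStruct.Ext F B₀) (g : B₀ ⟶ C) (g' : C ⟶ F),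
      realize δ f f' → realize δ' g g' →
      ∃ (E₀ : B) (d : D ⟶ E₀) (e : E₀ ⟶ F) (h' : C ⟶ E₀) (δ'' : toPreExtStruct.Ext E₀ A),
        g ≫ h' = f' ≫ d ∧ h' ≫ e = g' ∧
        realize δ'' (f ≫ g) h' ∧ realize (toPreExtStruct.push f' δ') d e ∧
        toPreExtStruct.pull d δ'' = δ ∧ toPreExtStruct.push f δ'' = toPreExtStruct.pull e δ'
  /-- (ET4)ᵒᵖ -/
  et4op : ∀ ⦃F C B₀ D A : B⦄ (δ' : toPreExtStruct.Ext B₀ F) (s : F ⟶ C) (t : C ⟶ B₀)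
      (δ : toPreExtStruct.Ext A D) (u : D ⟶ B₀) (v : B₀ ⟶ A),
      realize δ' s t → realize δ u v →
      ∃ (E₀ : B) (e : F ⟶ E₀) (d : E₀ ⟶ D) (m : E₀ ⟶ C) (δ'' : toPreExtStruct.Ext A E₀),
        m ≫ t = d ≫ u ∧ e ≫ m = s ∧
        realize δ'' m (t ≫ v) ∧ realize (toPreExtStruct.pull u δ') e d ∧
        toPreExtStruct.push d δ'' = δ ∧
        toPreExtStruct.pull v δ'' = toPreExtStruct.push e δ'

namespace ExtStruct

variable {B : Type u} [Category.{v} B] [Preadditive B] [HasFiniteBiproducts B] (σ : ExtStruct B)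

/-- A sequence `A --x--> X --y--> C` is a conflation if it realizes some `E`-extension. -/
def Conflation {A X C : B} (x : A ⟶ X) (y : X ⟶ C) : Prop :=
  ∃ δ : σ.Ext C A, σ.realize δ x y

/-- `Cone(D₁, D₂)`: objects `X` admitting a conflation `D₁ ↣ D₂ ↠ X`. -/
def Cone (D₁ D₂ : Set B) : Set B :=
  {X | ∃ (A Y : B) (f : A ⟶ Y) (g : Y ⟶ X), A ∈ D₁ ∧ Y ∈ D₂ ∧ σ.Conflation f g}

/-- `CoCone(D₁, D₂)`: objects `X` admitting a conflation `X ↣ D₁ ↠ D₂`. -/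
def CoCone (D₁ D₂ : Set B) : Set B :=
  {X | ∃ (Y C : B) (f : X ⟶ Y) (g : Y ⟶ C), Y ∈ D₁ ∧ C ∈ D₂ ∧ σ.Conflation f g}

/-- `D₁ ∗ D₂`: objects `X` admitting a conflation `D₁ ↣ X ↠ D₂`. -/
def star (D₁ D₂ : Set B) : Set B :=
  {X | ∃ (A C : B) (f : A ⟶ X) (g : X ⟶ C), A ∈ D₁ ∧ C ∈ D₂ ∧ σ.Conflation f g}

/-- `add(D₁ ∗ D₂)`: direct summands of objects of `D₁ ∗ D₂`. -/
def addStar (D₁ D₂ : Set B) : Set B :=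
  {X | ∃ Y ∈ σ.star D₁ D₂, ∃ (s : X ⟶ Y) (r : Y ⟶ X), s ≫ r = 𝟙 X}

/-- An object `P` is projective if `E(P, −) = 0`. -/
def IsProj (P : B) : Prop := ∀ (A : B) (δ : σ.Ext P A), δ = 0

/-- An object `I` is injective if `E(−, I) = 0`. -/
def IsInj (I : B) : Prop := ∀ (C : B) (δ : σ.Ext C I), δ = 0

/-- The class of projective objects. -/
def projs : Set B := {P | σ.IsProj P}

/-- `B` has enough projectives: every object admits a deflation from a projective. -/
def EnoughProj : Prop :=
  ∀ X : B, ∃ (P K : B) (i : K ⟶ P) (p : P ⟶ X), σ.IsProj P ∧ σ.Conflation i p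

/-- `B` has enough injectives: every object admits an inflation into an injective. -/
def EnoughInj : Prop :=
  ∀ X : B, ∃ (I C : B) (i : X ⟶ I) (p : I ⟶ C), σ.IsInj I ∧ σ.Conflation i p

end ExtStruct

/-- A full additive subcategory (given as a class of objects), closed under isomorphisms and
direct summands. -/
structure AddClosed {B : Type u} [Category.{v} B] [Preadditive B] [HasFiniteBiproducts B]
    (U : Set B) : Prop where
  zero_mem : ∀ Z : B, IsZero Z → Z ∈ U
  biprod_mem : ∀ X Y : B, X ∈ U → Y ∈ U → (X ⊞ Y) ∈ U
  summand_mem : ∀ X Y : B, Y ∈ U → ∀ (s : X ⟶ Y) (r : Y ⟶ X), s ≫ r = 𝟙 X → X ∈ U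

namespace ExtStruct

variable {B : Type u} [Category.{v} B] [Preadditive B] [HasFiniteBiproducts B] (σ : ExtStruct B)

/-- A (complete) cotorsion pair `(U, V)` on an extriangulated category. -/
structure IsCotorsionPair (U V : Set B) : Prop where
  addU : AddClosed U
  addV : AddClosed V
  ext_vanish : ∀ ⦃X : B⦄, X ∈ U → ∀ ⦃Y : B⦄, Y ∈ V → ∀ δ : σ.Ext X Y, δ = 0
  resolve : ∀ X : B, ∃ (V₀ U₀ : B) (f : V₀ ⟶ U₀) (g : U₀ ⟶ X),
      V₀ ∈ V ∧ U₀ ∈ U ∧ σ.Conflation f g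
  coresolve : ∀ X : B, ∃ (V₀ U₀ : B) (f : X ⟶ V₀) (g : V₀ ⟶ U₀),
      V₀ ∈ V ∧ U₀ ∈ U ∧ σ.Conflation f g

/-- A twin cotorsion pair `((S,T), (U,V))`. -/
structure IsTwinCotorsionPair (S T U V : Set B) : Prop where
  fst : σ.IsCotorsionPair S T
  snd : σ.IsCotorsionPair U V
  ext_SV : ∀ ⦃X : B⦄, X ∈ S → ∀ ⦃Y : B⦄, Y ∈ V → ∀ δ : σ.Ext X Y, δ = 0

section Twin

variable (S T U V : Set B)

/-- `B⁺ = Cone(V, W)` for the core `W = T ∩ U` of a twin cotorsion pair. -/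
def tPos : Set B := σ.Cone V (T ∩ U)

/-- `B⁻ = CoCone(W, S)` for the core `W = T ∩ U` of a twin cotorsion pair. -/
def tNeg : Set B := σ.CoCone (T ∩ U) S

/-- The class of objects of the heart `H = B⁺ ∩ B⁻` of a twin cotorsion pair. -/
def tHeartSet : Set B := σ.tPos T U V ∩ σ.tNeg S T U

/-- The heart `H/W` of a twin cotorsion pair, as a full subcategory of the quotient
category `B/W`. -/
abbrev THeart := ObjectProperty.FullSubcategory (fun X : QuotCat (T ∩ U : Set B) => X.as ∈ σ.tHeartSet S T U V)


/-- A *reflection sequence* for `B₀`: a conflation `B₀ ↣ Z ↠ S₀` with `Z ∈ B⁺`, `S₀ ∈ S`,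
such that `z^* : E(Z, V₀) → E(B₀, V₀)` is surjective for every `V₀ ∈ V`. -/
def IsReflectionSeq {B₀ Z S₀ : B} (z : B₀ ⟶ Z) (w : Z ⟶ S₀) : Prop :=
  Z ∈ σ.tPos T U V ∧ S₀ ∈ S ∧ σ.Conflation z w ∧
    ∀ ⦃V₀ : B⦄, V₀ ∈ V → Function.Surjective (fun δ : σ.Ext Z V₀ => σ.pull z δ)

/-- A *coreflection sequence* for `B₀`: a conflation `V₀ ↣ X ↠ B₀` with `X ∈ B⁻`, `V₀ ∈ V`,
such that `x_* : E(S₀, X) → E(S₀, B₀)` is surjective for every `S₀ ∈ S`. -/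
def IsCoreflectionSeq {V₀ X B₀ : B} (v : V₀ ⟶ X) (x : X ⟶ B₀) : Prop :=
  X ∈ σ.tNeg S T U ∧ V₀ ∈ V ∧ σ.Conflation v x ∧
    ∀ ⦃S₀ : B⦄, S₀ ∈ S → Function.Surjective (fun δ : σ.Ext S₀ X => σ.push x δ)

end Twin

section Single

variable (U V : Set B)

/-- `B⁺` for a single cotorsion pair `(U,V)`, with core `W = U ∩ V`. -/
def sPos : Set B := σ.Cone V (U ∩ V)

/-- `B⁻` for a single cotorsion pair `(U,V)`, with core `W = U ∩ V`. -/
def sNeg : Set B := σ.CoCone (U ∩ V) U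

/-- The class of objects of the heart of a single cotorsion pair. -/
def sHeartSet : Set B := σ.sPos U V ∩ σ.sNeg U V

/-- The heart `H/W` of a cotorsion pair `(U,V)`, a full subcategory of `B/W`, `W = U ∩ V`. -/
abbrev SHeart := ObjectProperty.FullSubcategory (fun X : QuotCat (U ∩ V : Set B) => X.as ∈ σ.sHeartSet U V)

/-- The inclusion of the heart into the quotient category `B/W`. -/
abbrev sHeartIncl : σ.SHeart U V ⥤ QuotCat (U ∩ V : Set B) := ObjectProperty.ι _

/-- The kernel `K = add(U ∗ V)` of a cotorsion pair. -/
def kernelSet : Set B := σ.addStar U V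

/-- The coheart `C = ⊥₁K` of a cotorsion pair. -/
def coheart : Set B := {X | ∀ ⦃K : B⦄, K ∈ σ.kernelSet U V → ∀ δ : σ.Ext X K, δ = 0}


/-- An object of the heart determined by an object of `B` lying in `B⁺ ∩ B⁻`. -/
def sHeartObj {X : B} (hX : X ∈ σ.sHeartSet U V) : σ.SHeart U V :=
  ⟨(toQuot (U ∩ V : Set B)).obj X, hX⟩

/-- The image in the heart of a morphism of `B` between objects of `B⁺ ∩ B⁻`. -/
def sHeartHom {X Y : B} (hX : X ∈ σ.sHeartSet U V) (hY : Y ∈ σ.sHeartSet U V) (f : X ⟶ Y) :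
    σ.sHeartObj U V hX ⟶ σ.sHeartObj U V hY :=
  ⟨(toQuot (U ∩ V : Set B)).map f⟩

end Single

end ExtStruct

end ExtCat

section More

variable {B : Type u} [Category.{v} B] [Preadditive B] [HasFiniteBiproducts B]

namespace ExtStruct

variable (σ : ExtStruct B)

/-- `Ω D₀ = CoCone(P, D₀)`, the syzygy class of a class of objects `D₀`. -/
def omegaSet (D₀ : Set B) : Set B := σ.CoCone σ.projs D₀

/-- A choice of iterated syzygies of `X`: `Z 0 = X` and for each `i` there is a conflation
`Z (i+1) ↣ P ↠ Z i` with `P` projective. -/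
def SyzygyChain (X : B) (Z : ℕ → B) : Prop :=
  Z 0 = X ∧ ∀ i : ℕ, ∃ (P : B) (f : Z (i + 1) ⟶ P) (g : P ⟶ Z i),
    σ.IsProj P ∧ σ.Conflation f g

/-- A choice of iterated cosyzygies of `Y`: `Z 0 = Y` and for each `i` there is a conflation
`Z i ↣ I ↠ Z (i+1)` with `I` injective. -/
def CosyzygyChain (Y : B) (Z : ℕ → B) : Prop :=
  Z 0 = Y ∧ ∀ i : ℕ, ∃ (I : B) (f : Z i ⟶ I) (g : I ⟶ Z (i + 1)),
    σ.IsInj I ∧ σ.Conflation f g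

/-- Vanishing of the higher extension group `E^{i+1}(X, Y) = E(X, Σ^i Y)`, expressed via
cosyzygy chains.  (`hExtVanish σ X Y 0` is the vanishing of `E(X,Y)` itself.) -/
def hExtVanish (X Y : B) (i : ℕ) : Prop :=
  ∀ Z : ℕ → B, σ.CosyzygyChain Y Z → ∀ δ : σ.Ext X (Z i), δ = 0

/-- `Σ^j D₀`: the class of `j`-th cosyzygies of objects of `D₀`. -/
def sigmaSet (j : ℕ) (D₀ : Set B) : Set B :=
  {X | ∃ Y ∈ D₀, ∃ Z : ℕ → B, σ.CosyzygyChain Y Z ∧ Z j = X}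

/-- An `n`-cluster tilting subcategory of an extriangulated category:
it is functorially finite, and `X ∈ M` iff `E^i(X, M) = 0` for `1 ≤ i ≤ n - 1`,
iff `E^i(M, X) = 0` for `1 ≤ i ≤ n - 1`. -/
structure IsNClusterTilting (n : ℕ) (M : Set B) : Prop where
  contravariantly_finite : ∀ X : B, ∃ M₀ ∈ M, ∃ f : M₀ ⟶ X,
      ∀ M₁ ∈ M, ∀ g : M₁ ⟶ X, ∃ h : M₁ ⟶ M₀, h ≫ f = g
  covariantly_finite : ∀ X : B, ∃ M₀ ∈ M, ∃ f : X ⟶ M₀,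
      ∀ M₁ ∈ M, ∀ g : X ⟶ M₁, ∃ h : M₀ ⟶ M₁, f ≫ h = g
  mem_iff_vanish_left : ∀ X : B,
      X ∈ M ↔ ∀ i : ℕ, i ≤ n - 2 → ∀ Y ∈ M, σ.hExtVanish X Y i
  mem_iff_vanish_right : ∀ X : B,
      X ∈ M ↔ ∀ i : ℕ, i ≤ n - 2 → ∀ Y ∈ M, σ.hExtVanish Y X i

/-- `mlev σ M k` is the subcategory `M_{k+1}` of the paper: `M_1 = M` and
`M_{ℓ} = Cone(M_{ℓ-1}, M)`. -/
def mlev (M : Set B) : ℕ → Set B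
  | 0 => M
  | (k + 1) => σ.Cone (mlev M k) M

end ExtStruct

section Reflectors

variable (W P N : Set B)

/-- The data of a reflection functor `σ⁺` onto the objects of `B⁺` (given by the class `P`),
i.e. a left adjoint of the inclusion of the full subcategory of `B/W` on `P` in the bijection
formulation: composing with the unit `B → σ⁺B` gives bijections
`(σ⁺X ⟶ Y) ≃ (X ⟶ Y)` for all `Y` lying in `P`. -/
structure ReflectorData where
  σp : QuotCat W ⥤ QuotCat W
  mem : ∀ X : QuotCat W, (σp.obj X).as ∈ P
  unit : 𝟭 (QuotCat W) ⟶ σp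
  bij : ∀ (X Y : QuotCat W), Y.as ∈ P →
      Function.Bijective (fun g : (σp.obj X ⟶ Y) => unit.app X ≫ g)

/-- The data of a coreflection functor `σ⁻` onto the objects of `B⁻` (given by the class `N`). -/
structure CoreflectorData where
  σm : QuotCat W ⥤ QuotCat W
  mem : ∀ X : QuotCat W, (σm.obj X).as ∈ N
  counit : σm ⟶ 𝟭 (QuotCat W)
  bij : ∀ (X Y : QuotCat W), X.as ∈ N →
      Function.Bijective (fun g : (X ⟶ σm.obj Y) => g ≫ counit.app Y)

end Reflectors

namespace ExtStruct

variable (σ : ExtStruct B)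

/-- The data of the cohomological functor `H = σ⁻ ∘ σ⁺ ∘ π : B → H` associated to a cotorsion
pair `(U, V)`: reflection and coreflection functors together with a functor `H` to the heart
which is isomorphic to `σ⁻ ∘ σ⁺ ∘ π` after composition with the inclusion of the heart. -/
structure HeartFunctorData (U V : Set B) where
  refl : ReflectorData (B := B) (U ∩ V) (σ.sPos U V)
  corefl : CoreflectorData (B := B) (U ∩ V) (σ.sNeg U V)
  H : B ⥤ σ.SHeart U V
  iso : (H ⋙ σ.sHeartIncl U V) ≅ (toQuot (U ∩ V : Set B) ⋙ refl.σp ⋙ corefl.σm)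

end ExtStruct

section Mod

variable (D : Type u₂) [Category.{v₂} D] [Preadditive D]

/-- A coherent (finitely presented) functor `Dᵒᵖ ⥤ Ab`: one admitting an exact presentation
`Hom(−,X) → Hom(−,Y) → F → 0`. -/
def IsCoherent (F : Dᵒᵖ ⥤ AddCommGrpCat.{v₂}) : Prop :=
  ∃ (X Y : D) (f : X ⟶ Y) (η : preadditiveYoneda.obj Y ⟶ F),
    (∀ A : D, Function.Surjective (η.app (op A))) ∧
    (∀ (A : D) (g : A ⟶ Y), η.app (op A) g = 0 ↔ ∃ h : A ⟶ X, h ≫ f = g)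

/-- `mod D`: the category of coherent functors `Dᵒᵖ ⥤ Ab`. -/
abbrev ModCat := ObjectProperty.FullSubcategory (fun F : Dᵒᵖ ⥤ AddCommGrpCat.{v₂} => IsCoherent D F)

end Mod

/-- The additive quotient `C/P` of the full subcategory of `B` on a class `C₀` of objects by
(the ideal of) morphisms factoring through objects satisfying `P₀`. -/
abbrev StableCat (C₀ P₀ : Set B) :=
  QuotCat (D := ObjectProperty.FullSubcategory (fun X : B => X ∈ C₀)) {Z | Z.obj ∈ P₀}

end More


/-!
Fix `X`. Take a coreflection sequence `V₀ ↣ M ↠ X` and a reflection sequence `M ↣ Z₁ ↠ S₁`, so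
that `M ≅ σ⁻X` and `Z₁ ≅ σ⁺M ≅ σ⁺σ⁻X` in `B/W`. Axiom (ET4) for the composable inflations
`V₀ ↣ M ↣ Z₁` produces `Z₂` with conflations `X ↣ Z₂ ↠ S₁` and `V₀ ↣ Z₁ ↠ Z₂`, and these are again
a reflection sequence of `X` and a coreflection sequence of `Z₂`. Hence `Z₂ ≅ σ⁺X` and
`Z₁ ≅ σ⁻Z₂ ≅ σ⁻σ⁺X`. The second of these needs `Z₁ ∈ B⁻`, i.e. that `σ⁺` preserves `B⁻`; this is
seen by comparing the two homotopy pushouts of `W ← M → Z₁`. The isomorphisms obtained this way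
are compatible with the counit of `σ⁻`, and since `σ⁺σ⁻X` is isomorphic to an object of `B⁻`,
this compatibility pins them down and makes them natural.
-/

open ZeroObject PreExtStruct

section IdealQuotient

variable {B : Type u} [Category.{v} B] [Preadditive B] {W : Set B}

theorem comp_mem_wIdeal {X K Y : B} (hK : K ∈ W) (p : X ⟶ K) (q : K ⟶ Y) :
    p ≫ q ∈ wIdeal W X Y :=
  AddSubgroup.subset_closure ⟨K, hK, p, q, rfl⟩

theorem toQuot_map_eq_iff {X Y : B} (f g : X ⟶ Y) :
    (toQuot W).map f = (toQuot W).map g ↔ f - g ∈ wIdeal W X Y :=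
  Quotient.functor_map_eq_iff _ f g

theorem mem_wIdeal_iff [HasFiniteBiproducts B] (hW : AddClosed W) {X Y : B} {f : X ⟶ Y} :
    f ∈ wIdeal W X Y ↔ ∃ K ∈ W, ∃ (p : X ⟶ K) (q : K ⟶ Y), f = p ≫ q := by
  refine ⟨fun hf => ?_, fun hf => AddSubgroup.subset_closure hf⟩
  induction hf using AddSubgroup.closure_induction with
  | mem f hf => exact hf
  | zero => exact ⟨0, hW.zero_mem 0 (isZero_zero B), 0, 0, by simp⟩
  | add f g _ _ hf hg =>
    obtain ⟨K₁, hK₁, p₁, q₁, rfl⟩ := hf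
    obtain ⟨K₂, hK₂, p₂, q₂, rfl⟩ := hg
    exact ⟨K₁ ⊞ K₂, hW.biprod_mem _ _ hK₁ hK₂, biprod.lift p₁ p₂, biprod.desc q₁ q₂, by simp⟩
  | neg f _ hf =>
    obtain ⟨K, hK, p, q, rfl⟩ := hf
    exact ⟨K, hK, -p, q, by simp⟩

end IdealQuotient

section Reflections

variable {C : Type*} [Category C] (P : C → Prop)

def IsReflectionArrow {M Z : C} (z : M ⟶ Z) : Prop :=
  P Z ∧ ∀ Y, P Y → Function.Bijective fun g : Z ⟶ Y => z ≫ g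

def IsCoreflectionArrow {M X : C} (m : M ⟶ X) : Prop :=
  P M ∧ ∀ Y, P Y → Function.Bijective fun g : Y ⟶ M => g ≫ m

variable {P}

theorem IsReflectionArrow.exists_iso {M Z₁ Z₂ : C} {z₁ : M ⟶ Z₁} {z₂ : M ⟶ Z₂}
    (h₁ : IsReflectionArrow P z₁) (h₂ : IsReflectionArrow P z₂) :
    ∃ e : Z₁ ≅ Z₂, z₁ ≫ e.hom = z₂ := by
  obtain ⟨f, hf : z₁ ≫ f = z₂⟩ := (h₁.2 Z₂ h₂.1).2 z₂
  obtain ⟨g, hg : z₂ ≫ g = z₁⟩ := (h₂.2 Z₁ h₁.1).2 z₁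
  exact ⟨⟨f, g, (h₁.2 Z₁ h₁.1).1 (by simp [reassoc_of% hf, hg]),
    (h₂.2 Z₂ h₂.1).1 (by simp [reassoc_of% hg, hf])⟩, hf⟩

theorem IsCoreflectionArrow.exists_iso {M₁ M₂ X : C} {m₁ : M₁ ⟶ X} {m₂ : M₂ ⟶ X}
    (h₁ : IsCoreflectionArrow P m₁) (h₂ : IsCoreflectionArrow P m₂) :
    ∃ e : M₁ ≅ M₂, e.hom ≫ m₂ = m₁ := by
  obtain ⟨f, hf : f ≫ m₂ = m₁⟩ := (h₂.2 M₁ h₁.1).2 m₁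
  obtain ⟨g, hg : g ≫ m₁ = m₂⟩ := (h₁.2 M₂ h₂.1).2 m₂
  exact ⟨⟨f, g, (h₁.2 M₁ h₁.1).1 (by simp [hf, hg]), (h₂.2 M₂ h₂.1).1 (by simp [hf, hg])⟩, hf⟩

end Reflections

section Reflectors

variable {B : Type u} [Category.{v} B] [Preadditive B] {W P N : Set B}
  (rd : ReflectorData W P) (cd : CoreflectorData W N)

theorem ReflectorData.isReflectionArrow_unit (X : QuotCat W) :
    IsReflectionArrow (fun Y : QuotCat W => Y.as ∈ P) (rd.unit.app X) :=
  ⟨rd.mem X, rd.bij X⟩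

theorem CoreflectorData.isCoreflectionArrow_counit (X : QuotCat W) :
    IsCoreflectionArrow (fun Y : QuotCat W => Y.as ∈ N) (cd.counit.app X) :=
  ⟨cd.mem X, fun Y hY => cd.bij Y X hY⟩

theorem exists_iso_comp_counit_of_square {X M Z₁ Z₂ : QuotCat W} {m : M ⟶ X} {z : M ⟶ Z₁}
    {d : X ⟶ Z₂} {h : Z₁ ⟶ Z₂} (hm : IsCoreflectionArrow (fun Y : QuotCat W => Y.as ∈ N) m)
    (hz : IsReflectionArrow (fun Y : QuotCat W => Y.as ∈ P) z)
    (hd : IsReflectionArrow (fun Y : QuotCat W => Y.as ∈ P) d)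
    (hh : IsCoreflectionArrow (fun Y : QuotCat W => Y.as ∈ N) h) (hsq : z ≫ h = m ≫ d) :
    ∃ φ : rd.σp.obj (cd.σm.obj X) ≅ cd.σm.obj (rd.σp.obj X),
      φ.hom ≫ cd.counit.app (rd.σp.obj X) = rd.σp.map (cd.counit.app X) := by
  obtain ⟨i, hi⟩ := (cd.isCoreflectionArrow_counit X).exists_iso hm
  obtain ⟨j, hj⟩ := (rd.isReflectionArrow_unit M).exists_iso hz
  obtain ⟨k, hk⟩ := (rd.isReflectionArrow_unit X).exists_iso hd
  obtain ⟨l, hl⟩ := hh.exists_iso (cd.isCoreflectionArrow_counit Z₂)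
  refine ⟨rd.σp.mapIso i ≪≫ j ≪≫ l ≪≫ cd.σm.mapIso k.symm, (rd.bij _ _ (rd.mem X)).1 ?_⟩
  have hε : cd.σm.map k.inv ≫ cd.counit.app _ = cd.counit.app Z₂ ≫ k.inv :=
    cd.counit.naturality k.inv
  have hη : rd.unit.app _ ≫ rd.σp.map (cd.counit.app X) = cd.counit.app X ≫ rd.unit.app X :=
    (rd.unit.naturality _).symm
  have hη' : rd.unit.app _ ≫ rd.σp.map i.hom = i.hom ≫ rd.unit.app M :=
    (rd.unit.naturality _).symm
  simp [hε, hη, reassoc_of% hη', reassoc_of% hj, reassoc_of% hl, reassoc_of% hsq,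
    reassoc_of% hi, ← hk]

theorem nonempty_iso_of_forall_exists_iso
    (h : ∀ X : QuotCat W, ∃ φ : rd.σp.obj (cd.σm.obj X) ≅ cd.σm.obj (rd.σp.obj X),
      φ.hom ≫ cd.counit.app (rd.σp.obj X) = rd.σp.map (cd.counit.app X)) :
    Nonempty ((cd.σm ⋙ rd.σp) ≅ (rd.σp ⋙ cd.σm)) := by
  choose φ hφ using h
  have cancel : ∀ {X Y : QuotCat W} (g₁ g₂ : rd.σp.obj (cd.σm.obj X) ⟶ cd.σm.obj Y),
      g₁ ≫ cd.counit.app Y = g₂ ≫ cd.counit.app Y → g₁ = g₂ := fun {X Y} g₁ g₂ hg =>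
    (cancel_epi (φ X).inv).1 <| (cd.bij _ Y (cd.mem _)).1 (by simp [hg])
  refine ⟨NatIso.ofComponents φ fun {X Y} f => cancel _ _ ?_⟩
  have hε : cd.σm.map f ≫ cd.counit.app Y = cd.counit.app X ≫ f := cd.counit.naturality f
  have hε' : cd.σm.map (rd.σp.map f) ≫ cd.counit.app _ = cd.counit.app _ ≫ rd.σp.map f :=
    cd.counit.naturality (rd.σp.map f)
  change (rd.σp.map (cd.σm.map f) ≫ (φ Y).hom) ≫ cd.counit.app _ =
    ((φ X).hom ≫ cd.σm.map (rd.σp.map f)) ≫ cd.counit.app _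
  rw [Category.assoc, hφ, ← Functor.map_comp, hε, Category.assoc, hε', reassoc_of% hφ,
    Functor.map_comp]

end Reflectors

namespace PreExtStruct

variable {B : Type u} [Category.{v} B] [Preadditive B] (σ : PreExtStruct B)

theorem pull_pull {C'' C' C A : B} (c' : C'' ⟶ C') (c : C' ⟶ C) (δ : σ.Ext C A) :
    σ.pull c' (σ.pull c δ) = σ.pull (c' ≫ c) δ := by
  simp [pull]

theorem push_push {C A A' A'' : B} (a : A ⟶ A') (a' : A' ⟶ A'') (δ : σ.Ext C A) :
    σ.push a' (σ.push a δ) = σ.push (a ≫ a') δ := by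
  simp [push]

theorem pull_push {C' C A A' : B} (c : C' ⟶ C) (a : A ⟶ A') (δ : σ.Ext C A) :
    σ.pull c (σ.push a δ) = σ.push a (σ.pull c δ) := by
  simp only [pull, push]
  rw [← ConcreteCategory.comp_apply, ← ConcreteCategory.comp_apply, NatTrans.naturality]

theorem pull_id {C A : B} (δ : σ.Ext C A) : σ.pull (𝟙 C) δ = δ := by
  simp [pull]

theorem push_id {C A : B} (δ : σ.Ext C A) : σ.push (𝟙 A) δ = δ := by
  simp [push]

theorem pull_zero {C' C A : B} (c : C' ⟶ C) : σ.pull c (0 : σ.Ext C A) = 0 :=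
  map_zero _

theorem push_zero {C A A' : B} (a : A ⟶ A') : σ.push a (0 : σ.Ext C A) = 0 :=
  map_zero _

theorem pull_sub {C' C A : B} (c : C' ⟶ C) (δ δ' : σ.Ext C A) :
    σ.pull c (δ - δ') = σ.pull c δ - σ.pull c δ' :=
  map_sub _ _ _

theorem push_sub {C A A' : B} (a : A ⟶ A') (δ δ' : σ.Ext C A) :
    σ.push a (δ - δ') = σ.push a δ - σ.push a δ' :=
  map_sub _ _ _

end PreExtStruct

namespace ExtStruct

variable {B : Type u} [Category.{v} B] [Preadditive B] [HasFiniteBiproducts B] (σ : ExtStruct B)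

theorem pull_sub_mor {C' C A : B} (c c' : C' ⟶ C) (δ : σ.Ext C A) :
    σ.pull (c - c') δ = σ.pull c δ - σ.pull c' δ := by
  have := σ.additive_snd A
  change (σ.E.flip.obj A).map (c.op - c'.op) δ = _
  rw [Functor.map_sub]
  rfl

theorem push_sub_mor {C A A' : B} (a a' : A ⟶ A') (δ : σ.Ext C A) :
    σ.push (a - a') δ = σ.push a δ - σ.push a' δ := by
  have := σ.additive_fst (op C)
  change (σ.E.obj (op C)).map (a - a') δ = _
  rw [Functor.map_sub]
  rfl

theorem pull_zero_mor {C' C A : B} (δ : σ.Ext C A) : σ.pull (0 : C' ⟶ C) δ = 0 := by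
  simpa using σ.pull_sub_mor 0 0 δ

theorem realize_id_zero (A : B) : σ.realize (0 : σ.Ext 0 A) (𝟙 A) 0 := by
  let e : A ⊞ (0 : B) ≅ A := ⟨biprod.fst, biprod.lift (𝟙 A) 0, by ext; simp, by simp⟩
  simpa [e] using σ.realize_iso 0 biprod.inl biprod.snd e (σ.realize_zero A 0)

theorem realize_zero_id (A : B) : σ.realize (0 : σ.Ext A 0) 0 (𝟙 A) := by
  let e : (0 : B) ⊞ A ≅ A := ⟨biprod.snd, biprod.lift 0 (𝟙 A), by ext; simp, by simp⟩
  simpa [e] using σ.realize_iso 0 biprod.inl biprod.snd e (σ.realize_zero 0 A)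

theorem realize_shear {A A' : B} (a : A ⟶ A') :
    σ.realize (0 : σ.Ext A' A) (biprod.lift (𝟙 A) a) (biprod.snd - biprod.fst ≫ a) := by
  let e : A ⊞ A' ≅ A ⊞ A' :=
    ⟨𝟙 _ + biprod.fst ≫ a ≫ biprod.inr, 𝟙 _ - biprod.fst ≫ a ≫ biprod.inr,
      by ext <;> simp, by ext <;> simp⟩
  convert σ.realize_iso 0 biprod.inl biprod.snd e (σ.realize_zero A A') using 1 <;>
    ext <;> simp [e]

section Conflations

variable {σ} {A X C Q : B} {δ : σ.Ext C A} {x : A ⟶ X} {y : X ⟶ C}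

theorem comp_eq_zero_of_realize (h : σ.realize δ x y) : x ≫ y = 0 := by
  obtain ⟨c, -, hc⟩ := σ.et3 (0 : σ.Ext X A) δ biprod.inl biprod.snd x y
    (σ.realize_zero A X) h (𝟙 A) (biprod.desc x (𝟙 X)) (by simp)
  simpa using (biprod.inl ≫= hc).symm

theorem push_inflation_eq_zero (h : σ.realize δ x y) : σ.push x δ = 0 := by
  obtain ⟨c, hc, -⟩ := σ.et3 δ (0 : σ.Ext C X) x y biprod.inl biprod.snd h
    (σ.realize_zero X C) x (biprod.lift (𝟙 X) y)
    (by apply biprod.hom_ext <;> simp [comp_eq_zero_of_realize h])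
  rw [hc, pull_zero]

theorem pull_deflation_eq_zero (h : σ.realize δ x y) : σ.pull y δ = 0 := by
  obtain ⟨a, ha, -⟩ := σ.et3op (0 : σ.Ext X A) δ biprod.inl biprod.snd x y
    (σ.realize_zero A X) h biprod.snd y rfl
  rw [← ha, push_zero]

theorem exists_retraction_of_realize_zero (h : σ.realize (0 : σ.Ext C A) x y) :
    ∃ r : X ⟶ A, x ≫ r = 𝟙 A := by
  obtain ⟨b, hb, -⟩ := σ.realize_unique 0 x y _ _ h (σ.realize_zero A C)
  exact ⟨b.hom ≫ biprod.fst, by simp [reassoc_of% hb]⟩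

theorem exists_section_of_realize_zero (h : σ.realize (0 : σ.Ext C A) x y) :
    ∃ s : C ⟶ X, s ≫ y = 𝟙 C := by
  obtain ⟨b, -, hb⟩ := σ.realize_unique 0 x y _ _ h (σ.realize_zero A C)
  exact ⟨biprod.inr ≫ b.inv, by simp [← hb]⟩

theorem exists_desc_of_comp_eq_zero (h : σ.realize δ x y) {g : X ⟶ Q} (hg : x ≫ g = 0) :
    ∃ k : C ⟶ Q, y ≫ k = g := by
  obtain ⟨c, -, hc⟩ := σ.et3 δ (0 : σ.Ext Q 0) x y 0 (𝟙 Q) h (σ.realize_zero_id Q)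
    0 g (by simp [hg])
  exact ⟨c, by simpa using hc⟩

theorem exists_lift_of_comp_eq_zero (h : σ.realize δ x y) {g : Q ⟶ X} (hg : g ≫ y = 0) :
    ∃ k : Q ⟶ A, k ≫ x = g := by
  obtain ⟨a, -, ha⟩ := σ.et3op (0 : σ.Ext 0 Q) δ (𝟙 Q) 0 x y (σ.realize_id_zero Q) h
    g 0 (by simp [hg])
  exact ⟨a, by simpa using ha.symm⟩

theorem exists_extend_of_push_eq_zero (h : σ.realize δ x y) {f : A ⟶ Q}
    (hf : σ.push f δ = 0) : ∃ g : X ⟶ Q, x ≫ g = f := by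
  obtain ⟨b, hb, -⟩ := σ.realize_map δ (0 : σ.Ext C Q) x y biprod.inl biprod.snd f (𝟙 C) h
    (σ.realize_zero Q C) (by rw [hf, pull_zero])
  exact ⟨b ≫ biprod.fst, by simp [reassoc_of% hb]⟩

theorem exists_lift_of_pull_eq_zero (h : σ.realize δ x y) {k : Q ⟶ C}
    (hk : σ.pull k δ = 0) : ∃ l : Q ⟶ X, l ≫ y = k := by
  obtain ⟨b, -, hb⟩ := σ.realize_map (0 : σ.Ext Q A) δ biprod.inl biprod.snd x y (𝟙 A) k
    (σ.realize_zero A Q) h (by rw [push_zero, hk])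
  exact ⟨biprod.inr ≫ b, by simp [← hb]⟩

theorem exists_pull_eq_of_push_eq_zero (h : σ.realize δ x y) {θ : σ.Ext Q A}
    (hθ : σ.push x θ = 0) : ∃ g : Q ⟶ C, θ = σ.pull g δ := by
  obtain ⟨P, u, v, hP⟩ := σ.realize_ex θ
  obtain ⟨b, hb⟩ := exists_extend_of_push_eq_zero hP hθ
  obtain ⟨c, hc, -⟩ := σ.et3 θ δ u v x y hP h (𝟙 A) b (by simp [hb])
  exact ⟨c, by rw [← hc, push_id]⟩

theorem exists_push_eq_of_pull_eq_zero (h : σ.realize δ x y) {μ : σ.Ext C Q}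
    (hμ : σ.pull y μ = 0) : ∃ a : A ⟶ Q, μ = σ.push a δ := by
  obtain ⟨P, u, v, hP⟩ := σ.realize_ex μ
  obtain ⟨b, hb⟩ := exists_lift_of_pull_eq_zero hP hμ
  obtain ⟨a, ha, -⟩ := σ.et3op δ μ x y u v h hP b (𝟙 C) (by simp [hb])
  exact ⟨a, by rw [ha, pull_id]⟩

theorem exists_pull_eq_of_pull_eq_zero (h : σ.realize δ x y) {θ : σ.Ext X Q}
    (hθ : σ.pull x θ = 0) : ∃ ρ : σ.Ext C Q, θ = σ.pull y ρ := by
  obtain ⟨P, u, v, hP⟩ := σ.realize_ex θ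
  obtain ⟨_, e, _, _, δ', -, -, -, hsplit, -, hpull⟩ := σ.et4op θ u v δ x y hP h
  rw [hθ] at hsplit
  obtain ⟨r, hr⟩ := exists_retraction_of_realize_zero hsplit
  exact ⟨σ.push r δ', by rw [pull_push, hpull, push_push, hr, push_id]⟩

theorem exists_push_eq_of_push_eq_zero (h : σ.realize δ x y) {ν : σ.Ext Q X}
    (hν : σ.push y ν = 0) : ∃ κ : σ.Ext Q A, ν = σ.push x κ := by
  obtain ⟨P, u, v, hP⟩ := σ.realize_ex ν
  obtain ⟨_, _, _, _, δ', -, -, -, hsplit, -, hpush⟩ := σ.et4 δ x y ν u v h hP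
  rw [hν] at hsplit
  obtain ⟨s, hs⟩ := exists_section_of_realize_zero hsplit
  exact ⟨σ.pull s δ', by rw [← pull_push, hpush, pull_pull, hs, pull_id]⟩

theorem isIso_of_realize_of_comp_eq (h : σ.realize δ x y) {g : C ⟶ C} (hy : y ≫ g = y)
    (hδ : σ.pull g δ = δ) : IsIso g := by
  obtain ⟨l, hl⟩ := exists_lift_of_pull_eq_zero h (k := g - 𝟙 C)
    (by rw [pull_sub_mor, hδ, pull_id, sub_self])
  have hsq : (g - 𝟙 C) ≫ (g - 𝟙 C) = 0 := by
    have : y ≫ (g - 𝟙 C) = 0 := by rw [Preadditive.comp_sub, hy, Category.comp_id, sub_self]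
    rw [← reassoc_of% hl, this, comp_zero]
  have hgg : g ≫ g = g + g - 𝟙 C := by
    simp only [Preadditive.sub_comp, Preadditive.comp_sub, Category.comp_id,
      Category.id_comp] at hsq
    rw [← sub_eq_zero, ← hsq]
    abel
  refine ⟨𝟙 C + (𝟙 C - g), ?_, ?_⟩ <;>
    simp only [Preadditive.comp_add, Preadditive.add_comp, Preadditive.comp_sub,
      Preadditive.sub_comp, Category.comp_id, Category.id_comp, hgg] <;> abel

theorem exists_iso_of_realize_of_realize {C₁ C₂ : B} {δ₁ : σ.Ext C₁ A} {δ₂ : σ.Ext C₂ A}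
    {y₁ : X ⟶ C₁} {y₂ : X ⟶ C₂} (h₁ : σ.realize δ₁ x y₁) (h₂ : σ.realize δ₂ x y₂) :
    ∃ c : C₁ ≅ C₂, y₁ ≫ c.hom = y₂ := by
  obtain ⟨c, hc, hyc⟩ := σ.et3 δ₁ δ₂ x y₁ x y₂ h₁ h₂ (𝟙 A) (𝟙 X) (by simp)
  obtain ⟨c', hc', hyc'⟩ := σ.et3 δ₂ δ₁ x y₂ x y₁ h₂ h₁ (𝟙 A) (𝟙 X) (by simp)
  rw [push_id] at hc hc'
  simp only [Category.id_comp] at hyc hyc'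
  have : IsIso (c ≫ c') := isIso_of_realize_of_comp_eq h₁ (by rw [reassoc_of% hyc, hyc'])
    (by rw [← pull_pull, ← hc', ← hc])
  have : IsIso (c' ≫ c) := isIso_of_realize_of_comp_eq h₂ (by rw [reassoc_of% hyc', hyc])
    (by rw [← pull_pull, ← hc, ← hc'])
  refine ⟨⟨c, c' ≫ inv (c ≫ c'), by rw [← Category.assoc, IsIso.hom_inv_id], ?_⟩, hyc⟩
  calc (c' ≫ inv (c ≫ c')) ≫ c = inv (c' ≫ c) ≫ (c' ≫ c) ≫ (c' ≫ inv (c ≫ c')) ≫ c := by simp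
    _ = inv (c' ≫ c) ≫ c' ≫ ((c ≫ c') ≫ inv (c ≫ c')) ≫ c := by simp only [Category.assoc]
    _ = 𝟙 C₂ := by simp

theorem exists_homotopy_pushout {A' : B} (h : σ.realize δ x y) (a : A ⟶ A') :
    ∃ (Q : B) (p : X ⊞ A' ⟶ Q) (d : A' ⟶ Q) (e : Q ⟶ C ⊞ 0) (δ' : σ.Ext Q A),
      σ.realize δ' (biprod.lift x a) p ∧
      σ.realize (σ.pull biprod.fst (σ.push (-a) δ)) d e := by
  obtain ⟨Q, d, e, p, δ', -, -, hp, hd, -, -⟩ := σ.et4 _ _ _ _ _ _ (σ.realize_shear a)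
    (σ.realize_sum δ (0 : σ.Ext 0 A') x y (𝟙 A') 0 h (σ.realize_id_zero A'))
  have hlift : biprod.lift (𝟙 A) a ≫ biprod.map x (𝟙 A') = biprod.lift x a := by ext <;> simp
  refine ⟨Q, p, d, e, δ', hlift ▸ hp, ?_⟩
  convert hd using 1
  simp [sumExt, push_push, pull_zero, push_zero, ← pull_push]

end Conflations

variable {σ} {S T U V : Set B}

namespace IsCotorsionPair

variable (hUV : σ.IsCotorsionPair U V)
include hUV

theorem mem_fst_of_ext_eq_zero {X : B} (hX : ∀ ⦃V₀ : B⦄, V₀ ∈ V → ∀ θ : σ.Ext X V₀, θ = 0) :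
    X ∈ U := by
  obtain ⟨V₀, U₀, f, g, hV₀, hU₀, δ, h⟩ := hUV.resolve X
  rw [hX hV₀ δ] at h
  obtain ⟨s, hs⟩ := exists_section_of_realize_zero h
  exact hUV.addU.summand_mem X U₀ hU₀ s g hs

theorem mem_snd_of_ext_eq_zero {X : B} (hX : ∀ ⦃U₀ : B⦄, U₀ ∈ U → ∀ θ : σ.Ext U₀ X, θ = 0) :
    X ∈ V := by
  obtain ⟨V₀, U₀, f, g, hV₀, hU₀, δ, h⟩ := hUV.coresolve X
  rw [hX hU₀ δ] at h
  obtain ⟨r, hr⟩ := exists_retraction_of_realize_zero h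
  exact hUV.addV.summand_mem X V₀ hV₀ f r hr

theorem mem_fst_of_realize {A X C : B} {δ : σ.Ext C A} {x : A ⟶ X} {y : X ⟶ C}
    (h : σ.realize δ x y) (hA : A ∈ U) (hC : C ∈ U) : X ∈ U := by
  refine hUV.mem_fst_of_ext_eq_zero fun V₀ hV₀ θ => ?_
  obtain ⟨ρ, rfl⟩ := exists_pull_eq_of_pull_eq_zero h (hUV.ext_vanish hA hV₀ (σ.pull x θ))
  rw [hUV.ext_vanish hC hV₀ ρ, pull_zero]

theorem mem_snd_of_realize {A X C : B} {δ : σ.Ext C A} {x : A ⟶ X} {y : X ⟶ C}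
    (h : σ.realize δ x y) (hA : A ∈ V) (hC : C ∈ V) : X ∈ V := by
  refine hUV.mem_snd_of_ext_eq_zero fun U₀ hU₀ θ => ?_
  obtain ⟨κ, rfl⟩ := exists_push_eq_of_push_eq_zero h (hUV.ext_vanish hU₀ hC (σ.push y θ))
  rw [hUV.ext_vanish hU₀ hA κ, push_zero]

end IsCotorsionPair

namespace IsTwinCotorsionPair

variable (tw : σ.IsTwinCotorsionPair S T U V)
include tw

theorem S_subset_U : S ⊆ U := fun _ hS₀ =>
  tw.snd.mem_fst_of_ext_eq_zero fun _ hV₀ θ => tw.ext_SV hS₀ hV₀ θ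

theorem V_subset_T : V ⊆ T := fun _ hV₀ =>
  tw.fst.mem_snd_of_ext_eq_zero fun _ hS₀ θ => tw.ext_SV hS₀ hV₀ θ

theorem mem_tNeg_of_mem_W {K : B} (hK : K ∈ T ∩ U) : K ∈ σ.tNeg S T U :=
  ⟨K, 0, 𝟙 K, 0, hK, tw.fst.addU.zero_mem _ (isZero_zero B), 0, σ.realize_id_zero K⟩

theorem mem_tNeg_of_mem_S {X : B} (hX : X ∈ S) : X ∈ σ.tNeg S T U := by
  obtain ⟨T₀, S₀, f, g, hT₀, hS₀, δ, h⟩ := tw.fst.coresolve X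
  have hT₀U : T₀ ∈ U := tw.snd.mem_fst_of_realize h (tw.S_subset_U hX) (tw.S_subset_U hS₀)
  exact ⟨T₀, S₀, f, g, ⟨hT₀, hT₀U⟩, hS₀, δ, h⟩

theorem biprod_mem_tNeg {X Y : B} (hX : X ∈ σ.tNeg S T U) (hY : Y ∈ σ.tNeg S T U) :
    (X ⊞ Y) ∈ σ.tNeg S T U := by
  obtain ⟨W₁, S₁, f₁, g₁, hW₁, hS₁, δ₁, h₁⟩ := hX
  obtain ⟨W₂, S₂, f₂, g₂, hW₂, hS₂, δ₂, h₂⟩ := hY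
  exact ⟨W₁ ⊞ W₂, S₁ ⊞ S₂, biprod.map f₁ f₂, biprod.map g₁ g₂,
    ⟨tw.fst.addV.biprod_mem _ _ hW₁.1 hW₂.1, tw.snd.addU.biprod_mem _ _ hW₁.2 hW₂.2⟩,
    tw.fst.addU.biprod_mem _ _ hS₁ hS₂, _, σ.realize_sum δ₁ δ₂ f₁ g₁ f₂ g₂ h₁ h₂⟩

theorem mem_tNeg_of_realize_left {Z Y S₀ : B} {δ : σ.Ext S₀ Z} {f : Z ⟶ Y} {g : Y ⟶ S₀}
    (h : σ.realize δ f g) (hY : Y ∈ σ.tNeg S T U) (hS₀ : S₀ ∈ S) : Z ∈ σ.tNeg S T U := by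
  obtain ⟨W₁, S₁, f₁, g₁, hW₁, hS₁, δ₁, h₁⟩ := hY
  obtain ⟨E, d, e, f', δ', -, -, hf', he, -, -⟩ := σ.et4 δ f g δ₁ f₁ g₁ h h₁
  exact ⟨W₁, E, f ≫ f₁, f', hW₁, tw.fst.mem_fst_of_realize he hS₀ hS₁, δ', hf'⟩

theorem mem_tPos_of_realize_right {V₀ Y Z : B} {δ : σ.Ext Z V₀} {f : V₀ ⟶ Y} {g : Y ⟶ Z}
    (h : σ.realize δ f g) (hV₀ : V₀ ∈ V) (hY : Y ∈ σ.tPos T U V) : Z ∈ σ.tPos T U V := by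
  obtain ⟨V₁, W₁, f₁, g₁, hV₁, hW₁, δ₁, h₁⟩ := hY
  obtain ⟨E, e, d, m, δ', -, -, hm, he, -, -⟩ := σ.et4op δ₁ f₁ g₁ δ f g h₁ h
  exact ⟨E, W₁, m, g₁ ≫ g, tw.snd.mem_snd_of_realize he hV₁ hV₀, hW₁, δ', hm⟩

theorem exists_isReflectionSeq (B₀ : B) :
    ∃ (Z S₀ : B) (z : B₀ ⟶ Z) (w : Z ⟶ S₀), σ.IsReflectionSeq S T U V z w := by
  obtain ⟨V₀, U₀, v, g, hV₀, hU₀, δ, h⟩ := tw.snd.resolve B₀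
  obtain ⟨T₀, S₀, u, t, hT₀, hS₀, δT, hT⟩ := tw.fst.coresolve U₀
  obtain ⟨Z, z, w, h', δ', -, -, hZ, hzw, hδ', -⟩ := σ.et4 δ v g δT u t h hT
  have hT₀U : T₀ ∈ U := tw.snd.mem_fst_of_realize hT hU₀ (tw.S_subset_U hS₀)
  refine ⟨Z, S₀, z, w, ⟨V₀, T₀, v ≫ u, h', hV₀, ⟨hT₀, hT₀U⟩, δ', hZ⟩, hS₀, ⟨_, hzw⟩,
    fun V₁ hV₁ θ => ?_⟩
  obtain ⟨φ, rfl⟩ := exists_push_eq_of_pull_eq_zero h (tw.snd.ext_vanish hU₀ hV₁ (σ.pull g θ))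
  exact ⟨σ.push φ δ', by beta_reduce; rw [pull_push, hδ']⟩

theorem exists_isCoreflectionSeq (B₀ : B) :
    ∃ (V₀ X : B) (v : V₀ ⟶ X) (x : X ⟶ B₀), σ.IsCoreflectionSeq S T U V v x := by
  obtain ⟨T₀, S₀, c, g, hT₀, hS₀, δ, h⟩ := tw.fst.coresolve B₀
  obtain ⟨V₀, U₀, v, u, hV₀, hU₀, δU, hU⟩ := tw.snd.resolve T₀
  obtain ⟨X, v', x, m, δ', -, -, hX, hvx, hδ', -⟩ := σ.et4op δU v u δ c g hU h
  have hU₀T : U₀ ∈ T := tw.fst.mem_snd_of_realize hU (tw.V_subset_T hV₀) hT₀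
  refine ⟨V₀, X, v', x, ⟨U₀, S₀, m, u ≫ g, ⟨hU₀T, hU₀⟩, hS₀, δ', hX⟩, hV₀, ⟨_, hvx⟩,
    fun S₁ hS₁ θ => ?_⟩
  obtain ⟨k, rfl⟩ := exists_pull_eq_of_push_eq_zero h (tw.fst.ext_vanish hS₁ hT₀ (σ.push c θ))
  exact ⟨σ.pull k δ', by beta_reduce; rw [← pull_push, hδ']⟩

theorem mem_tNeg_of_realize_middle {B₀ Z S₀ : B} {ξ : σ.Ext S₀ B₀} {z : B₀ ⟶ Z}
    {w : Z ⟶ S₀} (h : σ.realize ξ z w) (hS₀ : S₀ ∈ S) (hB₀ : B₀ ∈ σ.tNeg S T U) :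
    Z ∈ σ.tNeg S T U := by
  obtain ⟨W₁, S₁, j, q, hW₁, hS₁, δ, hj⟩ := hB₀
  -- The homotopy pushout `Q` of `W₁ ← B₀ → Z` can be formed from either conflation. Formed from
  -- `ξ` along `j`, its conflation `W₁ ↣ Q ↠ S₀ ⊞ 0` splits since `E(S, T) = 0`; formed from `δ`
  -- along `z`, it gives `Z ↣ Q ↠ S₁ ⊞ 0`. Hence `Z ↣ W₁ ⊞ (S₀ ⊞ 0) ↠ S₁ ⊞ 0`.
  obtain ⟨Q₁, p₁, d₁, e₁, δ₁, hp₁, hd₁⟩ := exists_homotopy_pushout hj z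
  obtain ⟨Q₂, p₂, d₂, e₂, δ₂, hp₂, hd₂⟩ := exists_homotopy_pushout h j
  rw [tw.fst.ext_vanish hS₀ hW₁.1 (σ.push (-j) ξ), pull_zero] at hd₂
  obtain ⟨b, -, -⟩ := σ.realize_unique 0 _ _ _ _ hd₂ (σ.realize_zero W₁ (S₀ ⊞ 0))
  have hp₁' := σ.realize_iso δ₁ _ _ (biprod.braiding W₁ Z) hp₁
  rw [show biprod.lift j z ≫ (biprod.braiding W₁ Z).hom = biprod.lift z j by ext <;> simp]
    at hp₁'
  obtain ⟨c, -⟩ := exists_iso_of_realize_of_realize hp₁' hp₂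
  have h0 : (0 : B) ∈ S := tw.fst.addU.zero_mem _ (isZero_zero B)
  have hS₀' : (S₀ ⊞ 0) ∈ S := tw.fst.addU.biprod_mem _ _ hS₀ h0
  have hS₁' : (S₁ ⊞ 0) ∈ S := tw.fst.addU.biprod_mem _ _ hS₁ h0
  exact tw.mem_tNeg_of_realize_left (σ.realize_iso _ d₁ e₁ (c ≪≫ b) hd₁)
    (tw.biprod_mem_tNeg (tw.mem_tNeg_of_mem_W hW₁) (tw.mem_tNeg_of_mem_S hS₀')) hS₁'

theorem addClosed_core : AddClosed (T ∩ U) where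
  zero_mem Z hZ := ⟨tw.fst.addV.zero_mem Z hZ, tw.snd.addU.zero_mem Z hZ⟩
  biprod_mem X Y hX hY :=
    ⟨tw.fst.addV.biprod_mem X Y hX.1 hY.1, tw.snd.addU.biprod_mem X Y hX.2 hY.2⟩
  summand_mem X Y hY s r hsr :=
    ⟨tw.fst.addV.summand_mem X Y hY.1 s r hsr, tw.snd.addU.summand_mem X Y hY.2 s r hsr⟩

theorem mem_wIdeal_of_mem_S_of_mem_tPos {S₀ Y : B} (hS₀ : S₀ ∈ S) (hY : Y ∈ σ.tPos T U V)
    (k : S₀ ⟶ Y) : k ∈ wIdeal (T ∩ U) S₀ Y := by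
  obtain ⟨V₁, W₁, j, q, hV₁, hW₁, θ, h⟩ := hY
  obtain ⟨l, rfl⟩ := exists_lift_of_pull_eq_zero h (tw.ext_SV hS₀ hV₁ (σ.pull k θ))
  exact comp_mem_wIdeal hW₁ l q

theorem mem_wIdeal_of_mem_tNeg_of_mem_V {X V₀ : B} (hX : X ∈ σ.tNeg S T U) (hV₀ : V₀ ∈ V)
    (k : X ⟶ V₀) : k ∈ wIdeal (T ∩ U) X V₀ := by
  obtain ⟨W₁, S₁, j, q, hW₁, hS₁, θ, h⟩ := hX
  obtain ⟨l, rfl⟩ := exists_extend_of_push_eq_zero h (tw.ext_SV hS₁ hV₀ (σ.push k θ))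
  exact comp_mem_wIdeal hW₁ j l

end IsTwinCotorsionPair

namespace IsReflectionSeq

variable {B₀ Z S₀ : B} {z : B₀ ⟶ Z} {w : Z ⟶ S₀} (hz : σ.IsReflectionSeq S T U V z w)
  (tw : σ.IsTwinCotorsionPair S T U V)
include hz tw

theorem mem_wIdeal_of_comp_mem_wIdeal {Y : B} (hY : Y ∈ σ.tPos T U V) {a : Z ⟶ Y}
    (ha : z ≫ a ∈ wIdeal (T ∩ U) B₀ Y) : a ∈ wIdeal (T ∩ U) Z Y := by
  obtain ⟨-, hS₀, ⟨ξ, h⟩, -⟩ := hz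
  obtain ⟨K, hK, r, s, hrs⟩ := (mem_wIdeal_iff tw.addClosed_core).1 ha
  obtain ⟨r', rfl⟩ := exists_extend_of_push_eq_zero h (tw.fst.ext_vanish hS₀ hK.1 (σ.push r ξ))
  obtain ⟨k, hk⟩ := exists_desc_of_comp_eq_zero h (g := a - r' ≫ s) (by simp [hrs])
  rw [← sub_add_cancel a (r' ≫ s), ← hk]
  exact add_mem (comp_left_mem_wIdeal _ w (tw.mem_wIdeal_of_mem_S_of_mem_tPos hS₀ hY k))
    (comp_mem_wIdeal hK r' s)

theorem exists_sub_comp_mem_wIdeal {Y : B} (hY : Y ∈ σ.tPos T U V) (f : B₀ ⟶ Y) :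
    ∃ g : Z ⟶ Y, f - z ≫ g ∈ wIdeal (T ∩ U) B₀ Y := by
  obtain ⟨-, hS₀, ⟨ξ, h⟩, hsurj⟩ := hz
  obtain ⟨V₁, W₁, j, q, hV₁, hW₁, θ, hY⟩ := hY
  obtain ⟨θ', hθ' : σ.pull z θ' = σ.pull f θ⟩ := hsurj hV₁ (σ.pull f θ)
  obtain ⟨ρ, hρ⟩ := exists_pull_eq_of_pull_eq_zero h (θ := σ.push j θ')
    (by rw [pull_push, hθ', ← pull_push, push_inflation_eq_zero hY, pull_zero])
  rw [tw.fst.ext_vanish hS₀ hW₁.1 ρ, pull_zero] at hρ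
  obtain ⟨g, rfl⟩ := exists_pull_eq_of_push_eq_zero hY hρ
  obtain ⟨l, hl⟩ := exists_lift_of_pull_eq_zero hY (k := f - z ≫ g)
    (by rw [pull_sub_mor, ← pull_pull, hθ', sub_self])
  exact ⟨g, hl ▸ comp_mem_wIdeal hW₁ l q⟩

theorem isReflectionArrow :
    IsReflectionArrow (fun Y : QuotCat (T ∩ U) => Y.as ∈ σ.tPos T U V)
      ((toQuot (T ∩ U)).map z) := by
  refine ⟨hz.1, fun ⟨Y⟩ hY => ⟨fun g₁ g₂ hg => ?_, fun f => ?_⟩⟩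
  · obtain ⟨a₁, rfl⟩ := (toQuot (T ∩ U)).map_surjective g₁
    obtain ⟨a₂, rfl⟩ := (toQuot (T ∩ U)).map_surjective g₂
    dsimp only at hg
    rw [← Functor.map_comp, ← Functor.map_comp, toQuot_map_eq_iff, ← Preadditive.comp_sub] at hg
    rw [toQuot_map_eq_iff]
    exact hz.mem_wIdeal_of_comp_mem_wIdeal tw hY hg
  · obtain ⟨f, rfl⟩ := (toQuot (T ∩ U)).map_surjective f
    obtain ⟨g, hg⟩ := hz.exists_sub_comp_mem_wIdeal tw hY f
    refine ⟨(toQuot (T ∩ U)).map g, ?_⟩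
    dsimp only
    rw [← Functor.map_comp, toQuot_map_eq_iff, ← neg_sub]
    exact neg_mem hg

end IsReflectionSeq

namespace IsCoreflectionSeq

variable {V₀ X B₀ : B} {v : V₀ ⟶ X} {x : X ⟶ B₀} (hx : σ.IsCoreflectionSeq S T U V v x)
  (tw : σ.IsTwinCotorsionPair S T U V)
include hx tw

theorem mem_wIdeal_of_comp_mem_wIdeal {Y : B} (hY : Y ∈ σ.tNeg S T U) {a : Y ⟶ X}
    (ha : a ≫ x ∈ wIdeal (T ∩ U) Y B₀) : a ∈ wIdeal (T ∩ U) Y X := by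
  obtain ⟨-, hV₀, ⟨δ, h⟩, -⟩ := hx
  obtain ⟨K, hK, r, s, hrs⟩ := (mem_wIdeal_iff tw.addClosed_core).1 ha
  obtain ⟨s', rfl⟩ := exists_lift_of_pull_eq_zero h (tw.snd.ext_vanish hK.2 hV₀ (σ.pull s δ))
  obtain ⟨k, hk⟩ := exists_lift_of_comp_eq_zero h (g := a - r ≫ s') (by simp [hrs])
  rw [← sub_add_cancel a (r ≫ s'), ← hk]
  exact add_mem (comp_right_mem_wIdeal _ v (tw.mem_wIdeal_of_mem_tNeg_of_mem_V hY hV₀ k))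
    (comp_mem_wIdeal hK r s')

theorem exists_sub_comp_mem_wIdeal {Y : B} (hY : Y ∈ σ.tNeg S T U) (f : Y ⟶ B₀) :
    ∃ g : Y ⟶ X, f - g ≫ x ∈ wIdeal (T ∩ U) Y B₀ := by
  obtain ⟨-, hV₀, ⟨δ, h⟩, hsurj⟩ := hx
  obtain ⟨W₁, S₁, j, q, hW₁, hS₁, θ, hY⟩ := hY
  obtain ⟨θ', hθ' : σ.push x θ' = σ.push f θ⟩ := hsurj hS₁ (σ.push f θ)
  obtain ⟨ρ, hρ⟩ := exists_push_eq_of_push_eq_zero h (ν := σ.pull q θ')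
    (by rw [← pull_push, hθ', pull_push, pull_deflation_eq_zero hY, push_zero])
  rw [tw.snd.ext_vanish hW₁.2 hV₀ ρ, push_zero] at hρ
  obtain ⟨g, rfl⟩ := exists_push_eq_of_pull_eq_zero hY hρ
  obtain ⟨l, hl⟩ := exists_extend_of_push_eq_zero hY (f := f - g ≫ x)
    (by rw [push_sub_mor, ← push_push, hθ', sub_self])
  exact ⟨g, hl ▸ comp_mem_wIdeal hW₁ j l⟩

theorem isCoreflectionArrow :
    IsCoreflectionArrow (fun Y : QuotCat (T ∩ U) => Y.as ∈ σ.tNeg S T U)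
      ((toQuot (T ∩ U)).map x) := by
  refine ⟨hx.1, fun ⟨Y⟩ hY => ⟨fun g₁ g₂ hg => ?_, fun f => ?_⟩⟩
  · obtain ⟨a₁, rfl⟩ := (toQuot (T ∩ U)).map_surjective g₁
    obtain ⟨a₂, rfl⟩ := (toQuot (T ∩ U)).map_surjective g₂
    dsimp only at hg
    rw [← Functor.map_comp, ← Functor.map_comp, toQuot_map_eq_iff, ← Preadditive.sub_comp] at hg
    rw [toQuot_map_eq_iff]
    exact hx.mem_wIdeal_of_comp_mem_wIdeal tw hY hg
  · obtain ⟨f, rfl⟩ := (toQuot (T ∩ U)).map_surjective f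
    obtain ⟨g, hg⟩ := hx.exists_sub_comp_mem_wIdeal tw hY f
    refine ⟨(toQuot (T ∩ U)).map g, ?_⟩
    dsimp only
    rw [← Functor.map_comp, toQuot_map_eq_iff, ← neg_sub]
    exact neg_mem hg

end IsCoreflectionSeq

namespace IsTwinCotorsionPair

variable (tw : σ.IsTwinCotorsionPair S T U V)
include tw

theorem surjective_push_of_comp_eq {V₀ M X Z₁ Z₂ S₁ : B} {v : V₀ ⟶ M} {m : M ⟶ X}
    (hm : σ.IsCoreflectionSeq S T U V v m) {ξ : σ.Ext S₁ M} {z : M ⟶ Z₁} {w : Z₁ ⟶ S₁}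
    (hξ : σ.realize ξ z w) (hS₁ : S₁ ∈ S) {d : X ⟶ Z₂} {e : Z₂ ⟶ S₁}
    (hd : σ.realize (σ.push m ξ) d e) (hZ₂ : Z₂ ∈ σ.tPos T U V) {h : Z₁ ⟶ Z₂}
    (hsq : z ≫ h = m ≫ d) ⦃S₀ : B⦄ (hS₀ : S₀ ∈ S) :
    Function.Surjective fun ν : σ.Ext S₀ Z₁ => σ.push h ν := by
  intro ζ
  obtain ⟨-, hV₀, ⟨δ, hc⟩, hmsurj⟩ := hm
  obtain ⟨Q, a, b, hζ⟩ := σ.realize_ex ζ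
  obtain ⟨E, d', e', -, ε, -, -, -, hE, hε, hεd⟩ := σ.et4 _ d e ζ a b hd hζ
  obtain ⟨ε₁, hε₁ : σ.push m ε₁ = ε⟩ := hmsurj (tw.fst.mem_fst_of_realize hE hS₁ hS₀) ε
  have hξ' : σ.pull d' ε₁ = ξ := by
    obtain ⟨ρ, hρ⟩ := exists_push_eq_of_push_eq_zero hc (ν := σ.pull d' ε₁ - ξ)
      (by rw [push_sub, ← pull_push, hε₁, hε, sub_self])
    rwa [tw.ext_SV hS₁ hV₀ ρ, push_zero, sub_eq_zero] at hρ
  obtain ⟨ν, hν⟩ := exists_pull_eq_of_pull_eq_zero hE (θ := σ.push z ε₁)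
    (by rw [pull_push, hξ', push_inflation_eq_zero hξ])
  obtain ⟨t, ht⟩ := exists_push_eq_of_pull_eq_zero hE (μ := ζ - σ.push h ν)
    (by rw [pull_sub, pull_push, ← hν, push_push, hsq, ← push_push, hε₁, hεd, sub_self])
  -- `t : S₁ ⟶ Z₂` factors through the core, which `E(S, -)` kills.
  obtain ⟨V₂, W₂, f₂, g₂, hV₂, hW₂, δ₂, hZ₂⟩ := hZ₂
  obtain ⟨t', rfl⟩ := exists_lift_of_pull_eq_zero hZ₂ (tw.ext_SV hS₁ hV₂ (σ.pull t δ₂))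
  rw [← push_push, tw.fst.ext_vanish hS₀ hW₂.1 (σ.push t' _), push_zero, sub_eq_zero] at ht
  exact ⟨ν, ht.symm⟩

theorem exists_comp_eq_of_isCoreflectionSeq_of_isReflectionSeq {V₀ M X Z₁ S₁ : B}
    {v : V₀ ⟶ M} {m : M ⟶ X} (hm : σ.IsCoreflectionSeq S T U V v m) {z : M ⟶ Z₁}
    {w : Z₁ ⟶ S₁} (hz : σ.IsReflectionSeq S T U V z w) :
    ∃ (Z₂ : B) (d : X ⟶ Z₂) (e : Z₂ ⟶ S₁) (h : Z₁ ⟶ Z₂), σ.IsReflectionSeq S T U V d e ∧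
      σ.IsCoreflectionSeq S T U V (v ≫ z) h ∧ z ≫ h = m ≫ d := by
  obtain ⟨hM, hV₀, ⟨δ, hc⟩, -⟩ := id hm
  obtain ⟨hZ₁, hS₁, ⟨ξ, hξ⟩, hzsurj⟩ := hz
  obtain ⟨Z₂, d, e, h, δ', hsq, -, hh, hd, hδ', -⟩ := σ.et4 δ v m ξ z w hc hξ
  have hZ₂ : Z₂ ∈ σ.tPos T U V := tw.mem_tPos_of_realize_right hh hV₀ hZ₁
  refine ⟨Z₂, d, e, h, ⟨hZ₂, hS₁, ⟨_, hd⟩, fun V₁ hV₁ θ => ?_⟩,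
    ⟨tw.mem_tNeg_of_realize_middle hξ hS₁ hM, hV₀, ⟨_, hh⟩,
      tw.surjective_push_of_comp_eq hm hξ hS₁ hd hZ₂ hsq⟩, hsq⟩
  obtain ⟨θ₁, hθ₁ : σ.pull z θ₁ = σ.pull m θ⟩ := hzsurj hV₁ (σ.pull m θ)
  obtain ⟨Θ, rfl⟩ := exists_pull_eq_of_pull_eq_zero hh (θ := θ₁)
    (by rw [← pull_pull, hθ₁, pull_pull, comp_eq_zero_of_realize hc, pull_zero_mor])
  obtain ⟨φ, hφ⟩ := exists_push_eq_of_pull_eq_zero hc (μ := σ.pull d Θ - θ)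
    (by rw [pull_sub, pull_pull, ← hsq, ← pull_pull, hθ₁, sub_self])
  refine ⟨Θ - σ.push φ δ', ?_⟩
  beta_reduce
  rw [pull_sub, pull_push, hδ', ← hφ, sub_sub_cancel]

end IsTwinCotorsionPair

end ExtStruct

/-- Proposition 2.33 / `8.6`. Let `((S,T),(U,V))` be a twin cotorsion pair,
`σ⁺` a reflection functor onto `B̄⁺` (with unit `p : 𝟭 ⟶ σ⁺` inducing bijections
`B̄(σ⁺X, Y) ≅ B̄(X, Y)` for `Y ∈ B⁺`), and `σ⁻` a coreflection functor onto `B̄⁻` (with counit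
`m : σ⁻ ⟶ 𝟭` inducing bijections `B̄(X, σ⁻Y) ≅ B̄(X, Y)` for `X ∈ B⁻`).  Then there is a
natural isomorphism `η : σ⁺ ∘ σ⁻ ≅ σ⁻ ∘ σ⁺` (of functors from `B̄` to the heart). -/
theorem statement_7 {B : Type u} [Category.{v} B] [Preadditive B] [HasFiniteBiproducts B]
    (σ : ExtStruct B) {S T U V : Set B} (twin : σ.IsTwinCotorsionPair S T U V)
    (rd : ReflectorData (B := B) (T ∩ U) (σ.tPos T U V))
    (cd : CoreflectorData (B := B) (T ∩ U) (σ.tNeg S T U)) :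
    Nonempty ((cd.σm ⋙ rd.σp) ≅ (rd.σp ⋙ cd.σm)) := by
  refine nonempty_iso_of_forall_exists_iso rd cd fun ⟨X⟩ => ?_
  obtain ⟨V₀, M, v, m, hm⟩ := twin.exists_isCoreflectionSeq X
  obtain ⟨Z₁, S₁, z, w, hz⟩ := twin.exists_isReflectionSeq M
  obtain ⟨Z₂, d, e, h, hd, hh, hsq⟩ :=
    twin.exists_comp_eq_of_isCoreflectionSeq_of_isReflectionSeq hm hz
  exact exists_iso_comp_counit_of_square rd cd (hm.isCoreflectionArrow twin)
    (hz.isReflectionArrow twin) (hd.isReflectionArrow twin) (hh.isCoreflectionArrow twin)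
    (by simp only [← Functor.map_comp, hsq])

end ExtriHearts
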